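/- Let b : ℝ^d × [0,T] → ℝ^d, f : ℝ^d × [0,T] → ℝ, g : ℝ^d → ℝ be C¹, and let X : ℝ^d × [0,T] → ℝ^d solve the ODE ∂ₜX(x,t) = b(X(x,t),t), X(x,0) = x, with X C¹ in x. Let a : ℝ^d × [0,T] → ℝ^d solve the adjoint ODE ∂ₜa(x,t) = −∇ₓb(X(x,t),t) a(x,t) − ∇ₓf(X(x,t),t), a(x,T) = ∇g(X(x,T)). Then ∇ₓ[∫₀ᵀ f(X(x,t),t) dt + g(X(x,T))] = a(x,0). -/

import Mathlib

/-!
Write `J x = ∫₀ᵀ f(X x t, t) dt + g(X x T)`. Pairing the adjoint state with the variation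
`X x' t - X x t` and differentiating in `t` turns `J x' - J x - a(x,0) ⬝ᵥ (x' - x)` into the
integral over `[0,T]` of the first-order Taylor remainder of the Hamiltonian
`H(y,t) = f(y,t) + a(x,t) ⬝ᵥ b(y,t)` between the two trajectories, plus the Taylor remainder
of `g` at `X x T`. Grönwall's inequality, applied in a tube around `X x ·` on which `b` is
uniformly Lipschitz, makes the variation `O(‖x' - x‖)` uniformly on `[0,T]`, and uniform
differentiability of `H` on compact sets then makes both remainders `o(‖x' - x‖)`.
-/

open Matrix intervalIntegral

open Set Metric Filter Topology Asymptotics NNReal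

noncomputable def Matrix.dotProductCLM (n : Type*) [Fintype n] : (n → ℝ) →L[ℝ] (n → ℝ) →L[ℝ] ℝ :=
  LinearMap.toContinuousLinearMap
    (LinearMap.toContinuousLinearMap.toLinearMap ∘ₗ dotProductBilin ℝ ℝ)

@[simp]
theorem Matrix.dotProductCLM_apply_apply {n : Type*} [Fintype n] (u v : n → ℝ) :
    dotProductCLM n u v = u ⬝ᵥ v := rfl

noncomputable def Matrix.mulVecCLM (n : Type*) [Fintype n] [DecidableEq n] :
    Matrix n n ℝ →L[ℝ] (n → ℝ) →L[ℝ] (n → ℝ) :=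
  LinearMap.toContinuousLinearMap
    (LinearMap.toContinuousLinearMap.toLinearMap ∘ₗ Matrix.toLin'.toLinearMap)

@[simp]
theorem Matrix.mulVecCLM_apply_apply {n : Type*} [Fintype n] [DecidableEq n] (M : Matrix n n ℝ)
    (v : n → ℝ) : mulVecCLM n M v = M *ᵥ v := rfl

theorem dist_le_of_trajectories_ODE_of_lipschitzOnWith_closedBall {E : Type*}
    [NormedAddCommGroup E] [NormedSpace ℝ E] {v : ℝ → E → E} {K : ℝ≥0} {f g : ℝ → E}
    {a b ρ δ : ℝ}
    (hv : ∀ t ∈ Ico a b, LipschitzOnWith K (v t) (closedBall (g t) ρ))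
    (hf : ContinuousOn f (Icc a b)) (hf' : ∀ t ∈ Ico a b, HasDerivWithinAt f (v t (f t)) (Ici t) t)
    (hg : ContinuousOn g (Icc a b)) (hg' : ∀ t ∈ Ico a b, HasDerivWithinAt g (v t (g t)) (Ici t) t)
    (ha : dist (f a) (g a) ≤ δ) (hδ : δ * Real.exp (K * (b - a)) < ρ) :
    ∀ t ∈ Icc a b, dist (f t) (g t) ≤ δ * Real.exp (K * (t - a)) := by
  have hρ : 0 ≤ ρ := (mul_nonneg (dist_nonneg.trans ha) (Real.exp_pos _).le).trans hδ.le
  have gronwall : ∀ c ∈ Icc a b, (∀ t ∈ Ico a c, dist (f t) (g t) ≤ ρ) →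
      ∀ t ∈ Icc a c, dist (f t) (g t) ≤ δ * Real.exp (K * (t - a)) := fun c hc hfc =>
    have hsub : Icc a c ⊆ Icc a b := Icc_subset_Icc_right hc.2
    have hsub' : Ico a c ⊆ Ico a b := Ico_subset_Ico_right hc.2
    dist_le_of_trajectories_ODE_of_mem (fun t ht => hv t (hsub' ht)) (hf.mono hsub)
      (fun t ht => hf' t (hsub' ht)) (fun t ht => hfc t ht) (hg.mono hsub)
      (fun t ht => hg' t (hsub' ht)) (fun t _ => mem_closedBall_self hρ) ha
  have hexp : ∀ t ∈ Icc a b, δ * Real.exp (K * (t - a)) < ρ := fun t ht =>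
    lt_of_le_of_lt (mul_le_mul_of_nonneg_left (Real.exp_le_exp.2 (by gcongr; exact ht.2))
      (dist_nonneg.trans ha)) hδ
  -- the first exit time from the tube cannot exist
  have hstay : ∀ t ∈ Icc a b, dist (f t) (g t) < ρ := by
    by_contra! hexit
    obtain ⟨t₀, ht₀, hexit₀⟩ := hexit
    have hclosed : IsClosed (Icc a b ∩ (fun t => dist (f t) (g t)) ⁻¹' Ici ρ) :=
      (continuous_dist.comp_continuousOn (hf.prodMk hg)).preimage_isClosed_of_isClosed
        isClosed_Icc isClosed_Ici
    obtain ⟨t₁, ⟨ht₁, hexit₁⟩, hleast⟩ := (isCompact_Icc.of_isClosed_subset hclosed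
      inter_subset_left).exists_isLeast ⟨t₀, ht₀, hexit₀⟩
    have hbefore : ∀ t ∈ Ico a t₁, dist (f t) (g t) ≤ ρ := fun t ht =>
      le_of_not_ge fun h => ht.2.not_ge (hleast ⟨⟨ht.1, ht.2.le.trans ht₁.2⟩, h⟩)
    exact (hexit₁.trans (gronwall t₁ ht₁ hbefore t₁ ⟨ht₁.1, le_rfl⟩)).not_gt (hexp t₁ ht₁)
  intro t ht
  exact gronwall b ⟨ht.1.trans ht.2, le_rfl⟩ (fun s hs => (hstay s (Ico_subset_Icc_self hs)).le)
    t ht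

section ContinuousFDeriv

variable {E F P : Type*} [NormedAddCommGroup E] [NormedSpace ℝ E] [ProperSpace E]
  [NormedAddCommGroup F] [NormedSpace ℝ F]
  {φ : E → P → F} {φ' : E → P → E →L[ℝ] F} {K : Set E} {I : Set P}

theorem exists_lipschitzOnWith_closedBall_of_continuous_fderiv [TopologicalSpace P]
    (hφ : ∀ y p, HasFDerivAt (φ · p) (φ' y p) y) (hφ' : Continuous fun q : E × P => φ' q.1 q.2)
    (hK : IsCompact K) (hI : IsCompact I) (ρ : ℝ) :
    ∃ L : ℝ≥0, ∀ p ∈ I, ∀ y ∈ K, LipschitzOnWith L (φ · p) (closedBall y ρ) := by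
  obtain ⟨C, hC⟩ := ((hK.cthickening (r := ρ)).prod hI).exists_bound_of_continuousOn
    hφ'.continuousOn
  refine ⟨C.toNNReal, fun p hp y hy =>
    (convex_closedBall y ρ).lipschitzOnWith_of_nnnorm_hasFDerivWithin_le
      (fun z _ => (hφ z p).hasFDerivWithinAt) fun z hz => ?_⟩
  rw [← NNReal.coe_le_coe, coe_nnnorm, Real.coe_toNNReal']
  exact (hC (z, p) ⟨closedBall_subset_cthickening hy ρ hz, hp⟩).trans (le_max_left _ _)

theorem isLittleO_sub_sub_fderiv_of_continuous_fderiv [PseudoMetricSpace P] {α : Type*}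
    (hφ : ∀ y p, HasFDerivAt (φ · p) (φ' y p) y) (hφ' : Continuous fun q : E × P => φ' q.1 q.2)
    (hK : IsCompact K) (hI : IsCompact I) {l : Filter α} {y y' : α → E} {p : α → P}
    (hy : ∀ᶠ z in l, y z ∈ K) (hp : ∀ᶠ z in l, p z ∈ I)
    (hyy' : Tendsto (fun z => y' z - y z) l (𝓝 0)) :
    (fun z => φ (y' z) (p z) - φ (y z) (p z) - φ' (y z) (p z) (y' z - y z)) =o[l]
      fun z => y' z - y z := by
  refine isLittleO_iff.2 fun ε hε => ?_
  obtain ⟨δ, hδ, hφ'δ⟩ := Metric.uniformContinuousOn_iff_le.1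
    (((hK.cthickening (r := 1)).prod hI).uniformContinuousOn_of_continuous hφ'.continuousOn) ε hε
  have hη : 0 < min δ 1 := lt_min hδ one_pos
  filter_upwards [hy, hp, hyy'.eventually (closedBall_mem_nhds 0 hη)] with z hyz hpz hz
  rw [dist_zero_right] at hz
  refine (convex_closedBall (y z) (min δ 1)).norm_image_sub_le_of_norm_hasFDerivWithin_le'
    (fun w _ => (hφ w (p z)).hasFDerivWithinAt) (fun w hw => ?_) (mem_closedBall_self hη.le)
    (mem_closedBall_iff_norm.2 hz)
  rw [← dist_eq_norm]
  refine hφ'δ (w, p z) ⟨?_, hpz⟩ (y z, p z) ⟨self_subset_cthickening K hyz, hpz⟩ ?_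
  · exact closedBall_subset_cthickening hyz 1 (closedBall_subset_closedBall (min_le_right _ _) hw)
  · rw [Prod.dist_eq, dist_self, max_eq_left dist_nonneg]
    exact (mem_closedBall.1 hw).trans (min_le_left _ _)

end ContinuousFDeriv

section Flow

variable {E : Type*} [NormedAddCommGroup E] [NormedSpace ℝ E] [ProperSpace E]
  {b : E → ℝ → E} {b' : E → ℝ → E →L[ℝ] E} {X : E → ℝ → E}

theorem isBigO_flow_sub
    (hbd : ∀ y t, HasFDerivAt (b · t) (b' y t) y) (hb' : Continuous fun q : E × ℝ => b' q.1 q.2)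
    (hX0 : ∀ x, X x 0 = x) (hX : ∀ x t, HasDerivAt (X x) (b (X x t) t) t) (x : E) (T : ℝ) :
    (fun q : E × ℝ => X q.1 q.2 - X x q.2) =O[𝓝 x ×ˢ 𝓟 (Icc 0 T)] fun q => q.1 - x := by
  have hXc : ∀ x', Continuous (X x') := fun x' =>
    continuous_iff_continuousAt.2 fun t => (hX x' t).continuousAt
  obtain ⟨L, hL⟩ := exists_lipschitzOnWith_closedBall_of_continuous_fderiv hbd hb'
    (isCompact_Icc.image (hXc x)) isCompact_Icc 1
  have hnear : ∀ᶠ x' in 𝓝 x, dist x' x * Real.exp (L * (T - 0)) < 1 := by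
    refine Tendsto.eventually_lt_const zero_lt_one ?_
    simpa using ((tendsto_id (x := 𝓝 x)).dist (tendsto_const_nhds (x := x))).mul_const
      (Real.exp (L * (T - 0)))
  refine IsBigO.of_bound (Real.exp (L * T)) (eventually_prod_principal_iff.2 ?_)
  filter_upwards [hnear] with x' hx' t ht
  have hgron := dist_le_of_trajectories_ODE_of_lipschitzOnWith_closedBall (v := fun t y => b y t)
    (fun s hs => hL s (Ico_subset_Icc_self hs) _ (mem_image_of_mem _ (Ico_subset_Icc_self hs)))
    (hXc x').continuousOn (fun s _ => (hX x' s).hasDerivWithinAt)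
    (hXc x).continuousOn (fun s _ => (hX x s).hasDerivWithinAt)
    (by rw [hX0, hX0]) hx' t ht
  rw [← dist_eq_norm, ← dist_eq_norm, mul_comm]
  refine hgron.trans (mul_le_mul_of_nonneg_left (Real.exp_le_exp.2 ?_) dist_nonneg)
  gcongr
  simpa using ht.2

theorem isLittleO_remainder_along_flow {F : Type*} [NormedAddCommGroup F] [NormedSpace ℝ F]
    (hbd : ∀ y t, HasFDerivAt (b · t) (b' y t) y) (hb' : Continuous fun q : E × ℝ => b' q.1 q.2)
    (hX0 : ∀ x, X x 0 = x) (hX : ∀ x t, HasDerivAt (X x) (b (X x t) t) t)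
    {φ : E → ℝ → F} {φ' : E → ℝ → E →L[ℝ] F} (hφ : ∀ y t, HasFDerivAt (φ · t) (φ' y t) y)
    (hφ' : Continuous fun q : E × ℝ => φ' q.1 q.2) (x : E) (T : ℝ) :
    (fun q : E × ℝ => φ (X q.1 q.2) q.2 - φ (X x q.2) q.2 - φ' (X x q.2) q.2 (X q.1 q.2 - X x q.2))
      =o[𝓝 x ×ˢ 𝓟 (Icc 0 T)] fun q => q.1 - x := by
  have hflow := isBigO_flow_sub hbd hb' hX0 hX x T
  have hXc : Continuous (X x) := continuous_iff_continuousAt.2 fun t => (hX x t).continuousAt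
  refine (isLittleO_sub_sub_fderiv_of_continuous_fderiv (y := fun q => X x q.2)
    (y' := fun q => X q.1 q.2) (p := Prod.snd) (K := X x '' Icc 0 T) (I := Icc 0 T) hφ hφ'
    (isCompact_Icc.image hXc) isCompact_Icc
    ?_ ?_ (hflow.trans_tendsto ?_)).trans_isBigO hflow
  · exact eventually_prod_principal_iff.2 (.of_forall fun _ t ht => mem_image_of_mem _ ht)
  · exact eventually_prod_principal_iff.2 (.of_forall fun _ t ht => ht)
  · exact (tendsto_sub_nhds_zero_iff.2 tendsto_id).comp tendsto_fst

end Flow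

theorem HasFDerivAt.isLittleO_sub_sub_comp_of_isBigO {𝕜 α E F G : Type*}
    [NontriviallyNormedField 𝕜] [NormedAddCommGroup E] [NormedSpace 𝕜 E] [NormedAddCommGroup F]
    [NormedSpace 𝕜 F] [NormedAddCommGroup G] {g : E → F} {L : E →L[𝕜] F} {y : E}
    (hg : HasFDerivAt g L y) {l : Filter α} {u : α → E} {v : α → G}
    (huv : (fun z => u z - y) =O[l] v) (hv : Tendsto v l (𝓝 0)) :
    (fun z => g (u z) - g y - L (u z - y)) =o[l] v :=
  (hg.isLittleO.comp_tendsto (tendsto_sub_nhds_zero_iff.1 (huv.trans_tendsto hv))).trans_isBigO huv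

theorem isLittleO_intervalIntegral_of_isLittleO_prod {α E G : Type*} [NormedAddCommGroup E]
    [NormedSpace ℝ E] [NormedAddCommGroup G] {F : α × ℝ → E} {g : α → G} {l : Filter α}
    {a b : ℝ} (h : F =o[l ×ˢ 𝓟 (uIcc a b)] fun q => g q.1) :
    (fun z => ∫ t in a..b, F (z, t)) =o[l] g := by
  refine isLittleO_iff.2 fun c hc => ?_
  have hc' : 0 < c / (|b - a| + 1) := by positivity
  filter_upwards [eventually_prod_principal_iff.1 (h.bound hc')] with z hz
  calc ‖∫ t in a..b, F (z, t)‖ ≤ c / (|b - a| + 1) * ‖g z‖ * |b - a| :=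
        norm_integral_le_of_norm_le_const fun t ht => hz t (uIoc_subset_uIcc ht)
    _ ≤ c * ‖g z‖ := by
        rw [mul_right_comm, div_mul_eq_mul_div, mul_div_assoc]
        gcongr
        exact mul_le_of_le_one_right hc.le ((div_le_one (by positivity)).2 (by linarith))

theorem HasFDerivAt.add_dotProduct {d : ℕ} {f : (Fin d → ℝ) → ℝ} {b : (Fin d → ℝ) → Fin d → ℝ}
    {u y : Fin d → ℝ} {J : Matrix (Fin d) (Fin d) ℝ}
    (hf : HasFDerivAt f (dotProductCLM (Fin d) u) y)
    (hb : HasFDerivAt b (mulVecCLM (Fin d) J) y) (p : Fin d → ℝ) :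
    HasFDerivAt (fun y => f y + p ⬝ᵥ b y) (dotProductCLM (Fin d) (u + Jᵀ *ᵥ p)) y :=
  (hf.add ((dotProductCLM (Fin d) p).hasFDerivAt.comp y hb)).congr_fderiv <|
    ContinuousLinearMap.ext fun v => by simp [dotProduct_mulVec, mulVec_transpose]

theorem integral_hamiltonian_remainder_eq {d : ℕ} {b : (Fin d → ℝ) → ℝ → Fin d → ℝ}
    {Jb : (Fin d → ℝ) → ℝ → Matrix (Fin d) (Fin d) ℝ} {f : (Fin d → ℝ) → ℝ → ℝ}
    {gf : (Fin d → ℝ) → ℝ → Fin d → ℝ}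
    (hb : Continuous fun p : (Fin d → ℝ) × ℝ => b p.1 p.2)
    (hJb : Continuous fun p : (Fin d → ℝ) × ℝ => Jb p.1 p.2)
    (hf : Continuous fun p : (Fin d → ℝ) × ℝ => f p.1 p.2)
    (hgf : Continuous fun p : (Fin d → ℝ) × ℝ => gf p.1 p.2)
    {y y' p : ℝ → Fin d → ℝ} (hy : ∀ t, HasDerivAt y (b (y t) t) t)
    (hy' : ∀ t, HasDerivAt y' (b (y' t) t) t)
    (hp : ∀ t, HasDerivAt p (-((Jb (y t) t)ᵀ *ᵥ p t) - gf (y t) t) t) (T : ℝ) :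
    (∫ t in (0:ℝ)..T, (f (y' t) t + p t ⬝ᵥ b (y' t) t) - (f (y t) t + p t ⬝ᵥ b (y t) t)
        - (gf (y t) t + (Jb (y t) t)ᵀ *ᵥ p t) ⬝ᵥ (y' t - y t))
      = (∫ t in (0:ℝ)..T, f (y' t) t) - (∫ t in (0:ℝ)..T, f (y t) t)
        + p T ⬝ᵥ (y' T - y T) - p 0 ⬝ᵥ (y' 0 - y 0) := by
  have hyc : Continuous y := continuous_iff_continuousAt.2 fun t => (hy t).continuousAt
  have hy'c : Continuous y' := continuous_iff_continuousAt.2 fun t => (hy' t).continuousAt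
  have hpc : Continuous p := continuous_iff_continuousAt.2 fun t => (hp t).continuousAt
  have hψ : ∀ t, HasDerivAt (fun τ => p τ ⬝ᵥ (y' τ - y τ))
      ((-((Jb (y t) t)ᵀ *ᵥ p t) - gf (y t) t) ⬝ᵥ (y' t - y t)
        + p t ⬝ᵥ (b (y' t) t - b (y t) t)) t :=
    fun t => ((dotProductCLM (Fin d)).hasDerivAt_of_bilinear (fun _ => hp t)
      (fun _ => (hy' t).sub (hy t))).congr_deriv (add_comm _ _)
  have hfy : Continuous fun t => f (y t) t := hf.comp (hyc.prodMk continuous_id)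
  have hfy' : Continuous fun t => f (y' t) t := hf.comp (hy'c.prodMk continuous_id)
  have hfdiff : Continuous fun t => f (y' t) t - f (y t) t := hfy'.sub hfy
  have hby : Continuous fun t => b (y t) t := hb.comp (hyc.prodMk continuous_id)
  have hby' : Continuous fun t => b (y' t) t := hb.comp (hy'c.prodMk continuous_id)
  have hJy : Continuous fun t => Jb (y t) t := hJb.comp (hyc.prodMk continuous_id)
  have hgfy : Continuous fun t => gf (y t) t := hgf.comp (hyc.prodMk continuous_id)
  have hψ'c : Continuous fun t =>
      (-((Jb (y t) t)ᵀ *ᵥ p t) - gf (y t) t) ⬝ᵥ (y' t - y t)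
        + p t ⬝ᵥ (b (y' t) t - b (y t) t) := by
    fun_prop
  calc _ = ∫ t in (0:ℝ)..T, (f (y' t) t - f (y t) t) +
        ((-((Jb (y t) t)ᵀ *ᵥ p t) - gf (y t) t) ⬝ᵥ (y' t - y t)
          + p t ⬝ᵥ (b (y' t) t - b (y t) t)) := by
        refine integral_congr fun t _ => ?_
        simp only [add_dotProduct, sub_dotProduct, neg_dotProduct, dotProduct_sub]
        ring
    _ = _ := by
      rw [integral_add (hfdiff.intervalIntegrable _ _) (hψ'c.intervalIntegrable _ _),
        integral_sub (hfy'.intervalIntegrable _ _) (hfy.intervalIntegrable _ _),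
        integral_eq_sub_of_hasDerivAt (fun t _ => hψ t) (hψ'c.intervalIntegrable _ _)]
      ring

theorem stmt_17_general {d : ℕ} (T : ℝ) (hT : 0 < T)
    (b : (Fin d → ℝ) → ℝ → Fin d → ℝ) (Jb : (Fin d → ℝ) → ℝ → Matrix (Fin d) (Fin d) ℝ)
    (hb : Continuous fun p : (Fin d → ℝ) × ℝ => b p.1 p.2)
    (hJb : Continuous fun p : (Fin d → ℝ) × ℝ => Jb p.1 p.2)
    (hbd : ∀ (y : Fin d → ℝ) (t : ℝ), ∃ L : (Fin d → ℝ) →L[ℝ] (Fin d → ℝ),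
      HasFDerivAt (fun y' => b y' t) L y ∧ ∀ v, L v = (Jb y t).mulVec v)
    (f : (Fin d → ℝ) → ℝ → ℝ) (gf : (Fin d → ℝ) → ℝ → Fin d → ℝ)
    (hf : Continuous fun p : (Fin d → ℝ) × ℝ => f p.1 p.2)
    (hgf : Continuous fun p : (Fin d → ℝ) × ℝ => gf p.1 p.2)
    (hfd : ∀ (y : Fin d → ℝ) (t : ℝ), ∃ L : (Fin d → ℝ) →L[ℝ] ℝ,
      HasFDerivAt (fun y' => f y' t) L y ∧ ∀ v, L v = gf y t ⬝ᵥ v)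
    (g : (Fin d → ℝ) → ℝ) (gg : (Fin d → ℝ) → Fin d → ℝ)
    (hgd : ∀ y : Fin d → ℝ, ∃ L : (Fin d → ℝ) →L[ℝ] ℝ,
      HasFDerivAt g L y ∧ ∀ v, L v = gg y ⬝ᵥ v)
    -- the flow of the ODE Ẋ = b(X,t), C¹ in the initial condition x
    (X : (Fin d → ℝ) → ℝ → Fin d → ℝ)
    (hX0 : ∀ x, X x 0 = x)
    (hXode : ∀ x t, HasDerivAt (fun τ => X x τ) (b (X x t) t) t)
    -- the adjoint state
    (a : (Fin d → ℝ) → ℝ → Fin d → ℝ)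
    (haT : ∀ x, a x T = gg (X x T))
    (haode : ∀ x t, HasDerivAt (fun τ => a x τ)
      (-((Jb (X x t) t)ᵀ.mulVec (a x t)) - gf (X x t) t) t) :
    ∀ x : Fin d → ℝ, ∃ L : (Fin d → ℝ) →L[ℝ] ℝ,
      HasFDerivAt (fun x' => (∫ t in (0:ℝ)..T, f (X x' t) t) + g (X x' T)) L x
      ∧ ∀ v, L v = a x 0 ⬝ᵥ v := by
  intro x
  have hbd' : ∀ y t, HasFDerivAt (b · t) (mulVecCLM (Fin d) (Jb y t)) y := fun y t => by
    obtain ⟨L, hL, hLv⟩ := hbd y t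
    exact hL.congr_fderiv (ContinuousLinearMap.ext hLv)
  have hfd' : ∀ y t, HasFDerivAt (f · t) (dotProductCLM (Fin d) (gf y t)) y := fun y t => by
    obtain ⟨L, hL, hLv⟩ := hfd y t
    exact hL.congr_fderiv (ContinuousLinearMap.ext hLv)
  have hJb' := (mulVecCLM (Fin d)).continuous.comp hJb
  -- `H y t = f y t + a x t ⬝ᵥ b y t` is the Hamiltonian: the adjoint equation reads `ȧ = -∇H`
  have hH := fun y t => (hfd' y t).add_dotProduct (hbd' y t) (a x t)
  have hac : Continuous (a x) := continuous_iff_continuousAt.2 fun t => (haode x t).continuousAt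
  have hH' : Continuous fun q : (Fin d → ℝ) × ℝ =>
      dotProductCLM (Fin d) (gf q.1 q.2 + (Jb q.1 q.2)ᵀ *ᵥ a x q.2) :=
    (dotProductCLM (Fin d)).continuous.comp
      (hgf.add (hJb.matrix_transpose.matrix_mulVec (hac.comp continuous_snd)))
  have hrunning := isLittleO_remainder_along_flow hbd' hJb' hX0 hXode hH hH' x T
  rw [← uIcc_of_le hT.le] at hrunning
  obtain ⟨Lg, hLg, hLgv⟩ := hgd (X x T)
  have hterminal : (fun x' => g (X x' T) - g (X x T) - Lg (X x' T - X x T)) =o[𝓝 x] (· - x) :=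
    hLg.isLittleO_sub_sub_comp_of_isBigO ((isBigO_flow_sub hbd' hJb' hX0 hXode x T).comp_tendsto
      (tendsto_id.prodMk (tendsto_principal.2 (.of_forall fun _ => right_mem_Icc.2 hT.le))))
      (tendsto_sub_nhds_zero_iff.2 tendsto_id)
  refine ⟨dotProductCLM (Fin d) (a x 0), .of_isLittleO ?_, fun v => rfl⟩
  refine ((isLittleO_intervalIntegral_of_isLittleO_prod hrunning).add hterminal).congr_left
    fun x' => ?_
  have hidentity :=
    integral_hamiltonian_remainder_eq hb hJb hf hgf (hXode x) (hXode x') (haode x) T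
  simp only [hLgv, dotProductCLM_apply_apply, hidentity, haT, hX0]
  ring

/-- Deterministic adjoint method: if `X(x,·)` solves `Ẋ = b(X,t)`, `X(x,0) = x`, and the
adjoint state `a(x,·)` solves `ȧ = −(∂b/∂x)ᵀa − ∇ₓf` backwards from `a(x,T) = ∇g(X(x,T))`,
then `∇ₓ[∫₀ᵀ f(X(x,t),t) dt + g(X(x,T))] = a(x,0)`.  Here `Jb y t` is the Jacobian of
`b(·,t)` at `y`, and `gf y t`, `gg y` are the gradients of `f(·,t)` and `g`. -/
theorem stmt_17 {d : ℕ} (T : ℝ) (hT : 0 < T)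
    (b : (Fin d → ℝ) → ℝ → Fin d → ℝ) (Jb : (Fin d → ℝ) → ℝ → Matrix (Fin d) (Fin d) ℝ)
    (hb : Continuous fun p : (Fin d → ℝ) × ℝ => b p.1 p.2)
    (hJb : Continuous fun p : (Fin d → ℝ) × ℝ => Jb p.1 p.2)
    (hbd : ∀ (y : Fin d → ℝ) (t : ℝ), ∃ L : (Fin d → ℝ) →L[ℝ] (Fin d → ℝ),
      HasFDerivAt (fun y' => b y' t) L y ∧ ∀ v, L v = (Jb y t).mulVec v)
    (f : (Fin d → ℝ) → ℝ → ℝ) (gf : (Fin d → ℝ) → ℝ → Fin d → ℝ)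
    (hf : Continuous fun p : (Fin d → ℝ) × ℝ => f p.1 p.2)
    (hgf : Continuous fun p : (Fin d → ℝ) × ℝ => gf p.1 p.2)
    (hfd : ∀ (y : Fin d → ℝ) (t : ℝ), ∃ L : (Fin d → ℝ) →L[ℝ] ℝ,
      HasFDerivAt (fun y' => f y' t) L y ∧ ∀ v, L v = gf y t ⬝ᵥ v)
    (g : (Fin d → ℝ) → ℝ) (gg : (Fin d → ℝ) → Fin d → ℝ)
    (hgd : ∀ y : Fin d → ℝ, ∃ L : (Fin d → ℝ) →L[ℝ] ℝ,
      HasFDerivAt g L y ∧ ∀ v, L v = gg y ⬝ᵥ v)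
    -- the flow of the ODE Ẋ = b(X,t), C¹ in the initial condition x
    (X : (Fin d → ℝ) → ℝ → Fin d → ℝ)
    (hX0 : ∀ x, X x 0 = x)
    (hXode : ∀ x t, HasDerivAt (fun τ => X x τ) (b (X x t) t) t)
    (hXdiff : ∀ t, Differentiable ℝ fun x => X x t)
    -- the adjoint state
    (a : (Fin d → ℝ) → ℝ → Fin d → ℝ)
    (haT : ∀ x, a x T = gg (X x T))
    (haode : ∀ x t, HasDerivAt (fun τ => a x τ)
      (-((Jb (X x t) t)ᵀ.mulVec (a x t)) - gf (X x t) t) t) :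
    ∀ x : Fin d → ℝ, ∃ L : (Fin d → ℝ) →L[ℝ] ℝ,
      HasFDerivAt (fun x' => (∫ t in (0:ℝ)..T, f (X x' t) t) + g (X x' T)) L x
      ∧ ∀ v, L v = a x 0 ⬝ᵥ v :=
  stmt_17_general T hT b Jb hb hJb hbd f gf hf hgf hfd g gg hgd X hX0 hXode a haT haode
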